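/- arXiv:1509.03062 — 2 statements merged into one kernel-verified Lean document; each statement's English description precedes it below -/
import Mathlib

section
/- Let u^ε_{i,n} be the solutions of the ε-shifted discrete problems (M^ε_{i,n}). Then for every n ∈ ℕ: ∫₀^T ∫_Ω V^ε_n(x,t)² dx dt ≤ 2E(u₀) and sup_i ‖Δu^ε_{i,n}‖²_{L²(Ω)} ≤ 2E(u₀). -/
/-!
Formalization of statements from "A two obstacle problem for the parabolic
biharmonic equation" (Novaga–Okabe).  Sobolev-type memberships are expressed
through classical (total) derivatives `fderiv` / `iteratedFDeriv` together with
`Memℒp` conditions, and boundary conditions are imposed pointwise on the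
topological frontier.
-/

open MeasureTheory Metric Set Topology Filter
noncomputable section

namespace TwoObstacle

abbrev Euc (N : ℕ) := EuclideanSpace ℝ (Fin N)

variable {N : ℕ}

/-- unit coordinate vector. -/
def e (N : ℕ) (i : Fin N) : Euc N := EuclideanSpace.single i (1 : ℝ)

/-- classical second partial derivative ∂²u/∂xᵢ∂xⱼ. -/
def d2 (u : Euc N → ℝ) (x : Euc N) (i j : Fin N) : ℝ :=
  iteratedFDeriv ℝ 2 u x ![e N i, e N j]

/-- classical Laplacian. -/
def lap (u : Euc N → ℝ) (x : Euc N) : ℝ := ∑ i : Fin N, d2 u x i i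

/-- pointwise Hessian dot product D²u : D²v. -/
def hessDot (u v : Euc N → ℝ) (x : Euc N) : ℝ :=
  ∑ i : Fin N, ∑ j : Fin N, d2 u x i j * d2 v x i j

/-- A bounded domain with C⁴ boundary. -/
structure IsC4Domain (Ω : Set (Euc N)) : Prop where
  isOpen : IsOpen Ω
  nonempty : Ω.Nonempty
  bounded : Bornology.IsBounded Ω
  connected : IsConnected Ω
  boundary : ∀ x ∈ frontier Ω, ∃ (U : Set (Euc N)) (φ : Euc N → ℝ),
    x ∈ U ∧ IsOpen U ∧ ContDiffOn ℝ 4 φ U ∧ (∀ y ∈ U, fderiv ℝ φ y ≠ 0) ∧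
    Ω ∩ U = {y ∈ U | φ y < 0} ∧ frontier Ω ∩ U = {y ∈ U | φ y = 0}

/-- The obstacle hypotheses (1.1)-(1.2): f, g ∈ C⁴(Ω̄), f ≤ g in Ω, f < 0 < g on ∂Ω. -/
structure ObstaclePair (Ω : Set (Euc N)) (f g : Euc N → ℝ) : Prop where
  f_smooth : ContDiffOn ℝ 4 f (closure Ω)
  g_smooth : ContDiffOn ℝ 4 g (closure Ω)
  le : ∀ x ∈ Ω, f x ≤ g x
  f_neg : ∀ x ∈ frontier Ω, f x < 0
  g_pos : ∀ x ∈ frontier Ω, 0 < g x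

/-- membership in H²(Ω) (classical-derivative formulation). -/
def MemH2 (Ω : Set (Euc N)) (u : Euc N → ℝ) : Prop :=
  MemLp u 2 (volume.restrict Ω) ∧
  MemLp (fun x => ‖fderiv ℝ u x‖) 2 (volume.restrict Ω) ∧
  MemLp (fun x => ‖iteratedFDeriv ℝ 2 u x‖) 2 (volume.restrict Ω)

/-- membership in H²₀(Ω): H² together with vanishing of `u` and `∇u` on `∂Ω`. -/
def MemH20 (Ω : Set (Euc N)) (u : Euc N → ℝ) : Prop :=
  MemH2 Ω u ∧ ∀ x ∈ frontier Ω, u x = 0 ∧ fderiv ℝ u x = 0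

/-- membership in W^{2,∞}(Ω). -/
def MemW2inf (Ω : Set (Euc N)) (u : Euc N → ℝ) : Prop :=
  MemLp u ⊤ (volume.restrict Ω) ∧
  MemLp (fun x => ‖fderiv ℝ u x‖) ⊤ (volume.restrict Ω) ∧
  MemLp (fun x => ‖iteratedFDeriv ℝ 2 u x‖) ⊤ (volume.restrict Ω)

/-- squared H²(Ω) norm. -/
def H2normSq (Ω : Set (Euc N)) (u : Euc N → ℝ) : ℝ :=
  ∫ x in Ω, ((u x) ^ 2 + ‖fderiv ℝ u x‖ ^ 2 + ‖iteratedFDeriv ℝ 2 u x‖ ^ 2)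

/-- H²(Ω) inner product. -/
def H2inner (Ω : Set (Euc N)) (u v : Euc N → ℝ) : ℝ :=
  ∫ x in Ω, (u x * v x + (inner ℝ (gradient u x) (gradient v x) : ℝ) + hessDot u v x)

/-- biharmonic Dirichlet energy E(u) = ½∫_Ω |Δu|². -/
def energy (Ω : Set (Euc N)) (u : Euc N → ℝ) : ℝ :=
  (1 / 2) * ∫ x in Ω, (lap u x) ^ 2

/-- the constraint set K = {u ∈ H²₀(Ω) : f ≤ u ≤ g in Ω}. -/
def Kc (Ω : Set (Euc N)) (f g : Euc N → ℝ) : Set (Euc N → ℝ) :=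
  {u | MemH20 Ω u ∧ ∀ x ∈ Ω, f x ≤ u x ∧ u x ≤ g x}

/-- the discrete functional G(u) = E(u) + (1/(2τ))∫_Ω (u - prev)². -/
def Gfun (Ω : Set (Euc N)) (τ : ℝ) (prev u : Euc N → ℝ) : ℝ :=
  energy Ω u + (1 / (2 * τ)) * ∫ x in Ω, (u x - prev x) ^ 2

/-- `u` minimizes the discrete functional with datum `prev` over the set `K`. -/
def IsMin (Ω : Set (Euc N)) (τ : ℝ) (K : Set (Euc N → ℝ)) (prev u : Euc N → ℝ) : Prop :=
  u ∈ K ∧ ∀ w ∈ K, Gfun Ω τ prev u ≤ Gfun Ω τ prev w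

/-- `U` is the minimizing-movements chain starting from `u₀` for obstacles `f, g`. -/
def IsChain (Ω : Set (Euc N)) (f g : Euc N → ℝ) (τ : ℝ) (u₀ : Euc N → ℝ)
    (U : ℕ → Euc N → ℝ) : Prop :=
  U 0 = u₀ ∧ ∀ i : ℕ, IsMin Ω τ (Kc Ω f g) (U i) (U (i + 1))

/-- discrete velocity V_{i,n} = (u_{i,n} - u_{i-1,n})/τₙ (used for i ≥ 1). -/
def Vel (τ : ℝ) (U : ℕ → Euc N → ℝ) (i : ℕ) (x : Euc N) : ℝ :=
  (U i x - U (i - 1) x) / τ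

/-- piecewise constant interpolation of the velocities: Vₙ(·,t) = V_{i,n} on ((i-1)τ, iτ]. -/
def pcV (τ : ℝ) (U : ℕ → Euc N → ℝ) (t : ℝ) (x : Euc N) : ℝ :=
  Vel τ U ⌈t / τ⌉₊ x

/-- piecewise constant interpolation of the chain: ũₙ(·,t) = u_{i,n} on ((i-1)τ, iτ]. -/
def pcU (τ : ℝ) (U : ℕ → Euc N → ℝ) (t : ℝ) (x : Euc N) : ℝ :=
  U ⌈t / τ⌉₊ x

/-- piecewise linear interpolation of the chain:
uₙ(x,t) = u_{i-1,n}(x) + (t-(i-1)τ) V_{i,n}(x) on [(i-1)τ, iτ]. -/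
def plin (τ : ℝ) (U : ℕ → Euc N → ℝ) (t : ℝ) (x : Euc N) : ℝ :=
  U (⌈t / τ⌉₊ - 1) x + (t - ((⌈t / τ⌉₊ : ℝ) - 1) * τ) * Vel τ U ⌈t / τ⌉₊ x

/-- time derivative ∂ₜu. -/
def dt (u : ℝ → Euc N → ℝ) (t : ℝ) (x : Euc N) : ℝ :=
  deriv (fun s => u s x) t

/-- integral of a function against a signed measure (via the Jordan decomposition). -/
def pairing (μ : SignedMeasure (Euc N)) (φ : Euc N → ℝ) : ℝ :=
  (∫ x, φ x ∂μ.toJordanDecomposition.posPart) -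
    ∫ x, φ x ∂μ.toJordanDecomposition.negPart

/-- `φ` is a smooth test function compactly supported in `Ω`. -/
def IsTest (Ω : Set (Euc N)) (φ : Euc N → ℝ) : Prop :=
  ContDiff ℝ (⊤ : ℕ∞) φ ∧ HasCompactSupport φ ∧ tsupport φ ⊆ Ω

/-- the signed measure `μ` represents the distribution Δ²u + V in Ω, i.e.
`∫ φ dμ = ∫_Ω (Δu Δφ + V φ)` for every test function φ. -/
def Represents (Ω : Set (Euc N)) (u V : Euc N → ℝ) (μ : SignedMeasure (Euc N)) : Prop :=
  ∀ φ : Euc N → ℝ, IsTest Ω φ →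
    pairing μ φ = ∫ x in Ω, (lap u x * lap φ x + V x * φ x)

/-- the signed measure `μ` is nonnegative on measurable subsets of `S`. -/
def NonnegOn (μ : SignedMeasure (Euc N)) (S : Set (Euc N)) : Prop :=
  ∀ A : Set (Euc N), MeasurableSet A → A ⊆ S → 0 ≤ μ A

/-- the signed measure `μ` is nonpositive on measurable subsets of `S`. -/
def NonposOn (μ : SignedMeasure (Euc N)) (S : Set (Euc N)) : Prop :=
  ∀ A : Set (Euc N), MeasurableSet A → A ⊆ S → μ A ≤ 0

/-- the support of `μ` is contained in `S`: `μ` vanishes on measurable sets disjoint from `S`. -/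
def SuppIn (μ : SignedMeasure (Euc N)) (S : Set (Euc N)) : Prop :=
  ∀ A : Set (Euc N), MeasurableSet A → A ⊆ Sᶜ → μ A = 0

/-- sup norm of `h` on the set `S`. -/
def supAbsOn (S : Set (Euc N)) (h : Euc N → ℝ) : ℝ :=
  sSup ((fun x => |h x|) '' S)

/-- sup norm of the Hessian of `u` on the set `S`. -/
def supHessOn (S : Set (Euc N)) (u : Euc N → ℝ) : ℝ :=
  sSup ((fun x => ‖iteratedFDeriv ℝ 2 u x‖) '' S)

/-- L²(Ω) norm. -/
def L2norm (Ω : Set (Euc N)) (h : Euc N → ℝ) : ℝ :=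
  Real.sqrt (∫ x in Ω, (h x) ^ 2)

/-- `v : Ω → E` is bounded by `C` and γ-Hölder on Ω with constant `C`. -/
def HolderOn {E : Type*} [NormedAddCommGroup E] (Ω : Set (Euc N)) (γ : ℝ)
    (v : Euc N → E) (C : ℝ) : Prop :=
  ∀ x ∈ Ω, ∀ y ∈ Ω, ‖v x‖ ≤ C ∧ ‖v x - v y‖ ≤ C * ‖x - y‖ ^ γ

/-- membership in the admissible class 𝒦 on the time interval (0,T):
`u ∈ L²(0,T;H²₀(Ω)) ∩ H¹(0,T;L²(Ω))`, `u(·,0) = u₀` a.e. in Ω and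
`f ≤ u ≤ g` a.e. in Ω × (0,T). -/
def InK (Ω : Set (Euc N)) (f g u₀ : Euc N → ℝ) (T : ℝ) (u : ℝ → Euc N → ℝ) : Prop :=
  (∀ᵐ t ∂volume.restrict (Ioo (0 : ℝ) T), MemH20 Ω (u t)) ∧
  Integrable (fun p : ℝ × Euc N =>
      (u p.1 p.2) ^ 2 + ‖fderiv ℝ (u p.1) p.2‖ ^ 2 + ‖iteratedFDeriv ℝ 2 (u p.1) p.2‖ ^ 2)
    ((volume.restrict (Ioo (0 : ℝ) T)).prod (volume.restrict Ω)) ∧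
  Integrable (fun p : ℝ × Euc N => (dt u p.1 p.2) ^ 2)
    ((volume.restrict (Ioo (0 : ℝ) T)).prod (volume.restrict Ω)) ∧
  (∀ᵐ x ∂volume.restrict Ω, u 0 x = u₀ x) ∧
  (∀ᵐ p : ℝ × Euc N ∂((volume.restrict (Ioo (0 : ℝ) T)).prod (volume.restrict Ω)),
    f p.2 ≤ u p.1 p.2 ∧ u p.1 p.2 ≤ g p.2)

/-- `u` is a weak solution of problem (P) on (0,T): `u ∈ 𝒦` and
`∫₀ᵀ∫_Ω [∂ₜu (w-u) + Δu Δ(w-u)] ≥ 0` for every `w ∈ 𝒦`. -/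
def IsWeakSolution (Ω : Set (Euc N)) (f g u₀ : Euc N → ℝ) (T : ℝ)
    (u : ℝ → Euc N → ℝ) : Prop :=
  InK Ω f g u₀ T u ∧ ∀ w : ℝ → Euc N → ℝ, InK Ω f g u₀ T w →
    0 ≤ ∫ t in Ioo (0 : ℝ) T, ∫ x in Ω,
      (dt u t x * (w t x - u t x) + lap (u t) x * (lap (w t) x - lap (u t) x))

/-- `u ∈ L^∞(ℝ₊; H²₀(Ω)) ∩ H¹(ℝ₊; L²(Ω))`. -/
def GlobalReg (Ω : Set (Euc N)) (u : ℝ → Euc N → ℝ) : Prop :=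
  (∃ C : ℝ, ∀ᵐ t ∂volume.restrict (Ioi (0 : ℝ)),
    MemH20 Ω (u t) ∧ H2normSq Ω (u t) ≤ C) ∧
  Integrable (fun p : ℝ × Euc N => (dt u p.1 p.2) ^ 2)
    ((volume.restrict (Ioi (0 : ℝ))).prod (volume.restrict Ω))

/-- the penalization γ_ρ(λ) = λ²/ρ for λ < 0, 0 otherwise. -/
def pen (ρ lam : ℝ) : ℝ := if lam < 0 then lam ^ 2 / ρ else 0

/-- the penalized functional G^{ε,ρ}_{i,n}. -/
def Gpen (Ω : Set (Euc N)) (τ ρ : ℝ) (fe g prev v : Euc N → ℝ) : ℝ :=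
  ∫ x in Ω, ((1 / 2) * (lap v x) ^ 2 + (1 / (2 * τ)) * (v x - prev x) ^ 2
    + pen ρ (v x - fe x) + pen ρ (g x - v x))

/-- `w` minimizes the penalized functional over H²₀(Ω). -/
def IsPenMin (Ω : Set (Euc N)) (τ ρ : ℝ) (fe g prev w : Euc N → ℝ) : Prop :=
  MemH20 Ω w ∧ ∀ v : Euc N → ℝ, MemH20 Ω v →
    Gpen Ω τ ρ fe g prev w ≤ Gpen Ω τ ρ fe g prev v


/-- Proposition 3.2: uniform estimates for the ε-shifted discrete
solutions: ∫₀ᵀ∫_Ω (V^ε_n)² ≤ 2E(u₀) and sup_i ‖Δu^ε_{i,n}‖²_{L²(Ω)} ≤ 2E(u₀). -/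
theorem shifted_minimizers_estimates {N : ℕ} (hN : N ≤ 3)
    (Ω : Set (Euc N)) (hΩ : IsC4Domain Ω)
    (f g : Euc N → ℝ) (hfg : ObstaclePair Ω f g)
    (u₀ : Euc N → ℝ) (hu₀ : MemH20 Ω u₀)
    (hu₀fg : ∀ x ∈ Ω, f x ≤ u₀ x ∧ u₀ x ≤ g x)
    (T : ℝ) (hT : 0 < T) (n : ℕ) (hn : 0 < n)
    (ε : ℝ) (hε : 0 < ε) (Ue : ℕ → Euc N → ℝ)
    (hUe : IsChain Ω (fun x => f x - ε) g (T / n) u₀ Ue) :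
    (∫ t in Ioo (0 : ℝ) T, ∫ x in Ω, (pcV (T / n) Ue t x) ^ 2) ≤ 2 * energy Ω u₀ ∧
    ∀ i : ℕ, i ≤ n → (∫ x in Ω, (lap (Ue i) x) ^ 2) ≤ 2 * energy Ω u₀ := by
  set τ := T / n with hτdef
  have hnpos : (0 : ℝ) < n := Nat.cast_pos.mpr hn
  have hτ : 0 < τ := div_pos hT hnpos
  have hTnτ : T = n * τ := by
    rw [hτdef, mul_div_assoc', mul_div_cancel_left₀ T hnpos.ne']
  -- every chain element is admissible
  have memK : ∀ i, Ue i ∈ Kc Ω (fun x => f x - ε) g := by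
    intro i
    cases i with
    | zero =>
      rw [hUe.1]
      exact ⟨hu₀, fun x hx => ⟨show f x - ε ≤ u₀ x by linarith [(hu₀fg x hx).1], (hu₀fg x hx).2⟩⟩
    | succ j => exact (hUe.2 j).1
  -- the basic one-step energy estimate
  have step : ∀ i, energy Ω (Ue (i + 1))
      + (1 / (2 * τ)) * ∫ x in Ω, (Ue (i + 1) x - Ue i x) ^ 2 ≤ energy Ω (Ue i) := by
    intro i
    have h := (hUe.2 i).2 (Ue i) (memK i)
    have hG : Gfun Ω τ (Ue i) (Ue i) = energy Ω (Ue i) := by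
      simp [Gfun]
    rw [hG] at h
    simpa [Gfun] using h
  have sqnonneg : ∀ i, (0 : ℝ) ≤ ∫ x in Ω, (Ue (i + 1) x - Ue i x) ^ 2 :=
    fun i => integral_nonneg fun x => sq_nonneg _
  have Enonneg : ∀ u : Euc N → ℝ, 0 ≤ energy Ω u := fun u =>
    mul_nonneg (by norm_num) (integral_nonneg fun x => sq_nonneg _)
  have mono : ∀ i, energy Ω (Ue (i + 1)) ≤ energy Ω (Ue i) := by
    intro i
    have h := step i
    have h2 : 0 ≤ (1 / (2 * τ)) * ∫ x in Ω, (Ue (i + 1) x - Ue i x) ^ 2 :=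
      mul_nonneg (by positivity) (sqnonneg i)
    linarith
  have Ebound : ∀ i, energy Ω (Ue i) ≤ energy Ω u₀ := by
    intro i
    induction i with
    | zero => rw [hUe.1]
    | succ j ih => exact (mono j).trans ih
  constructor
  · -- velocity estimate
    have stepbound : ∀ i, τ * ∫ x in Ω, (Vel τ Ue (i + 1) x) ^ 2
        ≤ 2 * (energy Ω (Ue i) - energy Ω (Ue (i + 1))) := by
      intro i
      have h := step i
      have hc : ∫ x in Ω, (Vel τ Ue (i + 1) x) ^ 2
          = (∫ x in Ω, (Ue (i + 1) x - Ue i x) ^ 2) / τ ^ 2 := by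
        simp only [Vel, Nat.add_sub_cancel, div_pow]
        exact integral_div _ _
      rw [hc]
      set I := ∫ x in Ω, (Ue (i + 1) x - Ue i x) ^ 2 with hI
      have key : τ * (I / τ ^ 2) = 2 * ((1 / (2 * τ)) * I) := by
        field_simp
      rw [key]
      linarith
    have sum_le : ∑ i ∈ Finset.range n, τ * ∫ x in Ω, (Vel τ Ue (i + 1) x) ^ 2
        ≤ 2 * energy Ω u₀ := by
      calc ∑ i ∈ Finset.range n, τ * ∫ x in Ω, (Vel τ Ue (i + 1) x) ^ 2
          ≤ ∑ i ∈ Finset.range n, 2 * (energy Ω (Ue i) - energy Ω (Ue (i + 1))) :=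
            Finset.sum_le_sum fun i _ => stepbound i
        _ = 2 * ∑ i ∈ Finset.range n, (energy Ω (Ue i) - energy Ω (Ue (i + 1))) := by
            rw [Finset.mul_sum]
        _ = 2 * (energy Ω (Ue 0) - energy Ω (Ue n)) := by
            rw [Finset.sum_range_sub' (fun i => energy Ω (Ue i))]
        _ ≤ 2 * energy Ω u₀ := by
            rw [hUe.1]
            have := Enonneg (Ue n)
            linarith
    -- identify the time integral with the sum
    set F : ℝ → ℝ := fun t => ∫ x in Ω, (Vel τ Ue ⌈t / τ⌉₊ x) ^ 2 with hF
    have ceil_eq : ∀ k : ℕ, ∀ t ∈ Set.Ioc ((k : ℝ) * τ) ((k + 1 : ℝ) * τ),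
        ⌈t / τ⌉₊ = k + 1 := by
      intro k t ht
      rw [Nat.ceil_eq_iff (Nat.succ_ne_zero k)]
      constructor
      · simpa using (lt_div_iff₀ hτ).mpr ht.1
      · push_cast
        exact (div_le_iff₀ hτ).mpr ht.2
    have piece : ∀ k : ℕ, ∫ t in Set.Ioc ((k : ℝ) * τ) ((k + 1 : ℝ) * τ), F t
        = τ * ∫ x in Ω, (Vel τ Ue (k + 1) x) ^ 2 := by
      intro k
      have hconst : ∀ t ∈ Set.Ioc ((k : ℝ) * τ) ((k + 1 : ℝ) * τ),
          F t = ∫ x in Ω, (Vel τ Ue (k + 1) x) ^ 2 := by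
        intro t ht
        simp only [hF, ceil_eq k t ht]
      rw [setIntegral_congr_fun measurableSet_Ioc hconst, setIntegral_const,
        measureReal_def, Real.volume_Ioc, smul_eq_mul]
      congr 1
      rw [ENNReal.toReal_ofReal (by nlinarith)]
      ring
    have hle : ∀ k : ℕ, (k : ℝ) * τ ≤ (k + 1 : ℝ) * τ := by
      intro k
      nlinarith [hτ.le, (Nat.cast_nonneg k : (0:ℝ) ≤ k)]
    have hint : ∀ k : ℕ, k < n → IntervalIntegrable F volume
        ((fun m : ℕ => (m : ℝ) * τ) k) ((fun m : ℕ => (m : ℝ) * τ) (k + 1)) := by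
      intro k _
      have hle' : ((k : ℕ) : ℝ) * τ ≤ ((k + 1 : ℕ) : ℝ) * τ := by push_cast; exact hle k
      rw [intervalIntegrable_iff_integrableOn_Ioc_of_le hle']
      have : Set.Ioc (((k : ℕ) : ℝ) * τ) (((k + 1 : ℕ) : ℝ) * τ)
          = Set.Ioc ((k : ℝ) * τ) ((k + 1 : ℝ) * τ) := by push_cast; rfl
      rw [this]
      rw [integrableOn_congr_fun
        (g := fun _ => ∫ x in Ω, (Vel τ Ue (k + 1) x) ^ 2)
        (fun t ht => by simp only [hF, ceil_eq k t ht]) measurableSet_Ioc]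
      exact integrableOn_const measure_Ioc_lt_top.ne
    have hmain : (∫ t in Ioo (0 : ℝ) T, F t)
        = ∑ k ∈ Finset.range n, τ * ∫ x in Ω, (Vel τ Ue (k + 1) x) ^ 2 := by
      calc ∫ t in Ioo (0 : ℝ) T, F t = ∫ t in Set.Ioc (0 : ℝ) T, F t :=
            (integral_Ioc_eq_integral_Ioo).symm
        _ = ∫ t in (0 : ℝ)..T, F t := (intervalIntegral.integral_of_le hT.le).symm
        _ = ∫ t in ((fun m : ℕ => (m : ℝ) * τ) 0)..((fun m : ℕ => (m : ℝ) * τ) n), F t := by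
            norm_num [hTnτ]
        _ = ∑ k ∈ Finset.range n, ∫ t in ((k : ℝ) * τ)..((k + 1 : ℕ) : ℝ) * τ, F t :=
            (intervalIntegral.sum_integral_adjacent_intervals hint).symm
        _ = ∑ k ∈ Finset.range n, τ * ∫ x in Ω, (Vel τ Ue (k + 1) x) ^ 2 := by
            refine Finset.sum_congr rfl fun k _ => ?_
            have hle' : ((k : ℕ) : ℝ) * τ ≤ ((k + 1 : ℕ) : ℝ) * τ := by push_cast; exact hle k
            rw [intervalIntegral.integral_of_le hle']
            have : Set.Ioc (((k : ℕ) : ℝ) * τ) (((k + 1 : ℕ) : ℝ) * τ)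
                = Set.Ioc ((k : ℝ) * τ) ((k + 1 : ℝ) * τ) := by push_cast; rfl
            rw [this, piece k]
    have : (∫ t in Ioo (0 : ℝ) T, ∫ x in Ω, (pcV τ Ue t x) ^ 2)
        = ∫ t in Ioo (0 : ℝ) T, F t := rfl
    rw [this, hmain]
    exact sum_le
  · -- energy estimate
    intro i _
    have h2E : (∫ x in Ω, (lap (Ue i) x) ^ 2) = 2 * energy Ω (Ue i) := by
      unfold energy; ring
    rw [h2E]
    have := Ebound i
    linarith

end TwoObstacle
end
end

section
/- Let w^{ε,ρ}_{i,n} be the unique minimizer of the penalized functional G^{ε,ρ}_{i,n} over H²₀(Ω). Then the following estimates hold: ‖Δw^{ε,ρ}_{i,n}‖²_{L²(Ω)} ≤ 2E(u₀); (1/(2τₙ))‖w^{ε,ρ}_{i,n} − u^ε_{i−1,n}‖²_{L²(Ω)} ≤ E(u₀); and max{‖(w^{ε,ρ}_{i,n} − f_ε)⁻‖²_{L²(Ω)}, ‖(g − w^{ε,ρ}_{i,n})⁻‖²_{L²(Ω)}} ≤ ρ E(u₀), where v⁻ denotes the negative part of v. -/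
/-!
Formalization of statements from "A two obstacle problem for the parabolic
biharmonic equation" (Novaga–Okabe).  Sobolev-type memberships are expressed
through classical (total) derivatives `fderiv` / `iteratedFDeriv` together with
`Memℒp` conditions, and boundary conditions are imposed pointwise on the
topological frontier.
-/

open MeasureTheory Metric Set Topology Filter
noncomputable section

namespace TwoObstacle

variable {N : ℕ}

section Aux

lemma pen_eq (ρ lam : ℝ) : pen ρ lam = (max (-lam) 0) ^ 2 / ρ := by
  unfold pen
  split_ifs with h
  · rw [max_eq_left (by linarith : (0:ℝ) ≤ -lam), neg_sq]
  · push_neg at h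
    rw [max_eq_right (by linarith : -lam ≤ 0)]
    simp

lemma pen_nonneg {ρ : ℝ} (hρ : 0 ≤ ρ) (lam : ℝ) : 0 ≤ pen ρ lam := by
  rw [pen_eq]
  exact div_nonneg (sq_nonneg _) hρ

lemma pen_le {ρ : ℝ} (hρ : 0 < ρ) (lam : ℝ) : pen ρ lam ≤ lam ^ 2 / ρ := by
  rw [pen_eq]
  have h1 : max (-lam) 0 ≤ |lam| := max_le (neg_le_abs lam) (abs_nonneg lam)
  have h2 : (max (-lam) 0) ^ 2 ≤ lam ^ 2 := by
    have := pow_le_pow_left₀ (le_max_right (-lam) 0) h1 2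
    simpa [sq_abs] using this
  gcongr

lemma pen_of_nonneg {ρ lam : ℝ} (h : 0 ≤ lam) : pen ρ lam = 0 := if_neg (not_lt.2 h)

lemma measurable_d2 {N : ℕ} (u : Euc N → ℝ) (i j : Fin N) :
    Measurable (fun x => d2 u x i j) := by
  letI : MeasurableSpace (ContinuousMultilinearMap ℝ (fun _ : Fin 1 => Euc N) ℝ) := borel _
  haveI : BorelSpace (ContinuousMultilinearMap ℝ (fun _ : Fin 1 => Euc N) ℝ) := ⟨rfl⟩
  have h2f : (fun x => d2 u x i j)
      = fun x => fderiv ℝ (iteratedFDeriv ℝ 1 u) x ((![e N i, e N j]) 0)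
          (Fin.tail ![e N i, e N j]) :=
    funext fun x => iteratedFDeriv_succ_apply_left _
  rw [h2f]
  exact ((ContinuousEvalConst.continuous_eval_const _).measurable).comp
    (measurable_fderiv_apply_const _ _ _)

lemma measurable_lap {N : ℕ} (u : Euc N → ℝ) : Measurable (lap u) :=
  Finset.measurable_sum _ fun i _ => measurable_d2 u i i

lemma abs_d2_le {N : ℕ} (u : Euc N → ℝ) (x : Euc N) (i j : Fin N) :
    |d2 u x i j| ≤ ‖iteratedFDeriv ℝ 2 u x‖ := by
  have h := (iteratedFDeriv ℝ 2 u x).le_opNorm ![e N i, e N j]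
  have hprod : (∏ k : Fin 2, ‖(![e N i, e N j]) k‖) = 1 := by
    simp [Fin.prod_univ_two, e, EuclideanSpace.norm_single]
  rw [hprod, mul_one] at h
  simpa [d2, Real.norm_eq_abs] using h

lemma lap_sq_le {N : ℕ} (u : Euc N → ℝ) (x : Euc N) :
    (lap u x) ^ 2 ≤ (N : ℝ) ^ 2 * ‖iteratedFDeriv ℝ 2 u x‖ ^ 2 := by
  have h1 : |lap u x| ≤ (N : ℝ) * ‖iteratedFDeriv ℝ 2 u x‖ := by
    calc |lap u x| ≤ ∑ i : Fin N, |d2 u x i i| := Finset.abs_sum_le_sum_abs _ _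
      _ ≤ ∑ _i : Fin N, ‖iteratedFDeriv ℝ 2 u x‖ :=
          Finset.sum_le_sum fun i _ => abs_d2_le u x i i
      _ = (N : ℝ) * ‖iteratedFDeriv ℝ 2 u x‖ := by
          simp [Finset.sum_const, mul_comm]
  calc (lap u x) ^ 2 = |lap u x| ^ 2 := (sq_abs _).symm
    _ ≤ ((N : ℝ) * ‖iteratedFDeriv ℝ 2 u x‖) ^ 2 :=
        pow_le_pow_left₀ (abs_nonneg _) h1 2
    _ = (N : ℝ) ^ 2 * ‖iteratedFDeriv ℝ 2 u x‖ ^ 2 := by ring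

end Aux

/-- estimates (3.9)-(3.11): the penalized minimizer w^{ε,ρ}_{i,n}
satisfies ‖Δw‖²_{L²} ≤ 2E(u₀), (1/(2τₙ))‖w - u^ε_{i-1,n}‖²_{L²} ≤ E(u₀), and
max{‖(w - f_ε)⁻‖²_{L²}, ‖(g - w)⁻‖²_{L²}} ≤ ρE(u₀). -/
theorem penalized_minimizer_estimates {N : ℕ} (hN : N ≤ 3)
    (Ω : Set (Euc N)) (hΩ : IsC4Domain Ω)
    (f g : Euc N → ℝ) (hfg : ObstaclePair Ω f g)
    (u₀ : Euc N → ℝ) (hu₀ : MemH20 Ω u₀)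
    (hu₀fg : ∀ x ∈ Ω, f x ≤ u₀ x ∧ u₀ x ≤ g x)
    (T : ℝ) (hT : 0 < T) (n : ℕ) (hn : 0 < n)
    (ε : ℝ) (hε : 0 < ε) (Ue : ℕ → Euc N → ℝ)
    (hUe : IsChain Ω (fun x => f x - ε) g (T / n) u₀ Ue)
    (i : ℕ) (hi1 : 1 ≤ i) (hin : i ≤ n)
    (ρ : ℝ) (hρ : 0 < ρ) (w : Euc N → ℝ)
    (hw : IsPenMin Ω (T / n) ρ (fun x => f x - ε) g (Ue (i - 1)) w) :
    (∫ x in Ω, (lap w x) ^ 2) ≤ 2 * energy Ω u₀ ∧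
    (1 / (2 * (T / n))) * (∫ x in Ω, (w x - Ue (i - 1) x) ^ 2) ≤ energy Ω u₀ ∧
    max (∫ x in Ω, (max (f x - ε - w x) 0) ^ 2)
        (∫ x in Ω, (max (w x - g x) 0) ^ 2) ≤ ρ * energy Ω u₀ := by
  have hτ : 0 < T / n := div_pos hT (by exact_mod_cast hn)
  have hΩm : MeasurableSet Ω := hΩ.isOpen.measurableSet
  haveI : IsFiniteMeasure (volume.restrict Ω) :=
    ⟨by rw [Measure.restrict_apply_univ]; exact hΩ.bounded.measure_lt_top⟩
  -- chain membership
  have hKmem : ∀ j, Ue j ∈ Kc Ω (fun x => f x - ε) g := by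
    intro j
    cases j with
    | zero =>
        rw [hUe.1]
        exact ⟨hu₀, fun x hx => ⟨by have := (hu₀fg x hx).1; simp only []; linarith,
          (hu₀fg x hx).2⟩⟩
    | succ j => exact (hUe.2 j).1
  -- energy decay along the chain
  have hEdec : ∀ j, energy Ω (Ue j) ≤ energy Ω u₀ := by
    intro j
    induction j with
    | zero => rw [hUe.1]
    | succ j ih =>
        have hmin := (hUe.2 j).2 (Ue j) (hKmem j)
        have h1 : energy Ω (Ue (j + 1)) ≤ Gfun Ω (T / n) (Ue j) (Ue (j + 1)) := by
          unfold Gfun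
          have h0 : 0 ≤ (1 / (2 * (T / n))) * ∫ x in Ω, (Ue (j + 1) x - Ue j x) ^ 2 :=
            mul_nonneg (by positivity) (integral_nonneg fun x => sq_nonneg _)
          linarith
        have h2 : Gfun Ω (T / n) (Ue j) (Ue j) = energy Ω (Ue j) := by
          simp [Gfun, sub_self]
        rw [h2] at hmin
        linarith
  have hprevK := hKmem (i - 1)
  have hprevmem : MemH20 Ω (Ue (i - 1)) := hprevK.1
  -- value of the penalized functional at the previous step
  have hGprev : Gpen Ω (T / n) ρ (fun x => f x - ε) g (Ue (i - 1)) (Ue (i - 1))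
      = energy Ω (Ue (i - 1)) := by
    unfold Gpen energy
    rw [setIntegral_congr_fun hΩm
      (g := fun x => (1 / 2) * (lap (Ue (i - 1)) x) ^ 2) ?_]
    · rw [integral_const_mul]
    · intro x hx
      have hK := hprevK.2 x hx
      have p1 : pen ρ (Ue (i - 1) x - (f x - ε)) = 0 := by
        apply pen_of_nonneg
        have := hK.1
        simp only [] at this
        linarith
      have p2 : pen ρ (g x - Ue (i - 1) x) = 0 := pen_of_nonneg (by linarith [hK.2])
      simp [p1, p2]
  have hGw_le : Gpen Ω (T / n) ρ (fun x => f x - ε) g (Ue (i - 1)) w ≤ energy Ω u₀ :=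
    le_trans (hw.2 (Ue (i - 1)) hprevmem) (by rw [hGprev]; exact hEdec (i - 1))
  -- basic Memℒp facts
  have hw2 : MemLp w 2 (volume.restrict Ω) := hw.1.1.1
  have hiFD : MemLp (fun x => ‖iteratedFDeriv ℝ 2 w x‖) 2 (volume.restrict Ω) := hw.1.1.2.2
  have hprev2 : MemLp (Ue (i - 1)) 2 (volume.restrict Ω) := hprevmem.1.1
  have hfc : ContinuousOn (fun x => f x - ε) Ω :=
    ((hfg.f_smooth.continuousOn).mono subset_closure).sub continuousOn_const
  have hgc : ContinuousOn g Ω := (hfg.g_smooth.continuousOn).mono subset_closure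
  obtain ⟨Mf, hMf⟩ := hΩ.bounded.isCompact_closure.exists_bound_of_continuousOn
    hfg.f_smooth.continuousOn
  obtain ⟨Mg, hMg⟩ := hΩ.bounded.isCompact_closure.exists_bound_of_continuousOn
    hfg.g_smooth.continuousOn
  have hfe2 : MemLp (fun x => f x - ε) 2 (volume.restrict Ω) := by
    refine MemLp.of_bound (hfc.aestronglyMeasurable hΩm) (Mf + |ε|) ?_
    refine (ae_restrict_iff' hΩm).2 (Eventually.of_forall fun x hx => ?_)
    have h1 := hMf x (subset_closure hx)
    calc ‖f x - ε‖ ≤ ‖f x‖ + ‖ε‖ := norm_sub_le _ _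
      _ ≤ Mf + |ε| := by rw [Real.norm_eq_abs ε]; linarith
  have hg2 : MemLp g 2 (volume.restrict Ω) := by
    refine MemLp.of_bound (hgc.aestronglyMeasurable hΩm) Mg ?_
    exact (ae_restrict_iff' hΩm).2 (Eventually.of_forall fun x hx =>
      hMg x (subset_closure hx))
  -- integrability of the four pieces
  have hA : Integrable (fun x => (1 / 2) * (lap w x) ^ 2) (volume.restrict Ω) := by
    refine Integrable.mono' (((hiFD.integrable_sq.const_mul ((N : ℝ) ^ 2)).const_mul
      (1 / 2))) ?_ (Eventually.of_forall fun x => ?_)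
    · exact (((measurable_lap w).pow_const 2).const_mul _).aestronglyMeasurable
    · rw [Real.norm_eq_abs, abs_of_nonneg (by positivity)]
      have := lap_sq_le w x
      nlinarith
  have hB : Integrable (fun x => (1 / (2 * (T / n))) * (w x - Ue (i - 1) x) ^ 2)
      (volume.restrict Ω) := ((hw2.sub hprev2).integrable_sq).const_mul _
  have hCm : AEStronglyMeasurable (fun x => pen ρ (w x - (f x - ε)))
      (volume.restrict Ω) := by
    have heq : (fun x => pen ρ (w x - (f x - ε)))
        = fun x => (max (-(w x - (f x - ε))) 0) ^ 2 / ρ := funext fun x => pen_eq ρ _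
    rw [heq]
    have hm : AEMeasurable (fun x => w x - (f x - ε)) (volume.restrict Ω) :=
      hw2.aestronglyMeasurable.aemeasurable.sub
        (hfe2.aestronglyMeasurable.aemeasurable)
    exact (((hm.neg.max aemeasurable_const).pow_const 2).div_const ρ).aestronglyMeasurable
  have hDm : AEStronglyMeasurable (fun x => pen ρ (g x - w x)) (volume.restrict Ω) := by
    have heq : (fun x => pen ρ (g x - w x))
        = fun x => (max (-(g x - w x)) 0) ^ 2 / ρ := funext fun x => pen_eq ρ _
    rw [heq]
    have hm : AEMeasurable (fun x => g x - w x) (volume.restrict Ω) :=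
      hg2.aestronglyMeasurable.aemeasurable.sub hw2.aestronglyMeasurable.aemeasurable
    exact (((hm.neg.max aemeasurable_const).pow_const 2).div_const ρ).aestronglyMeasurable
  have hC : Integrable (fun x => pen ρ (w x - (f x - ε))) (volume.restrict Ω) := by
    refine Integrable.mono' ((hw2.sub hfe2).integrable_sq.div_const ρ) hCm
      (Eventually.of_forall fun x => ?_)
    rw [Real.norm_eq_abs, abs_of_nonneg (pen_nonneg hρ.le _)]
    exact pen_le hρ _
  have hD : Integrable (fun x => pen ρ (g x - w x)) (volume.restrict Ω) := by
    refine Integrable.mono' ((hg2.sub hw2).integrable_sq.div_const ρ) hDm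
      (Eventually.of_forall fun x => ?_)
    rw [Real.norm_eq_abs, abs_of_nonneg (pen_nonneg hρ.le _)]
    exact pen_le hρ _
  -- split the penalized functional into four integrals
  have hsum : Gpen Ω (T / n) ρ (fun x => f x - ε) g (Ue (i - 1)) w
      = (∫ x in Ω, (1 / 2) * (lap w x) ^ 2)
        + (∫ x in Ω, (1 / (2 * (T / n))) * (w x - Ue (i - 1) x) ^ 2)
        + (∫ x in Ω, pen ρ (w x - (f x - ε)))
        + (∫ x in Ω, pen ρ (g x - w x)) := by
    unfold Gpen
    have s1 : ∫ x in Ω, ((1 / 2) * (lap w x) ^ 2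
          + (1 / (2 * (T / n))) * (w x - Ue (i - 1) x) ^ 2
          + pen ρ (w x - (f x - ε)) + pen ρ (g x - w x))
        = (∫ x in Ω, ((1 / 2) * (lap w x) ^ 2
            + (1 / (2 * (T / n))) * (w x - Ue (i - 1) x) ^ 2
            + pen ρ (w x - (f x - ε)))) + ∫ x in Ω, pen ρ (g x - w x) :=
      integral_add ((hA.add hB).add hC) hD
    have s2 : ∫ x in Ω, ((1 / 2) * (lap w x) ^ 2
          + (1 / (2 * (T / n))) * (w x - Ue (i - 1) x) ^ 2
          + pen ρ (w x - (f x - ε)))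
        = (∫ x in Ω, ((1 / 2) * (lap w x) ^ 2
            + (1 / (2 * (T / n))) * (w x - Ue (i - 1) x) ^ 2))
          + ∫ x in Ω, pen ρ (w x - (f x - ε)) :=
      integral_add (hA.add hB) hC
    have s3 : ∫ x in Ω, ((1 / 2) * (lap w x) ^ 2
          + (1 / (2 * (T / n))) * (w x - Ue (i - 1) x) ^ 2)
        = (∫ x in Ω, (1 / 2) * (lap w x) ^ 2)
          + ∫ x in Ω, (1 / (2 * (T / n))) * (w x - Ue (i - 1) x) ^ 2 :=
      integral_add hA hB
    rw [s1, s2, s3]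
  have nA : 0 ≤ ∫ x in Ω, (1 / 2) * (lap w x) ^ 2 :=
    integral_nonneg fun x => by positivity
  have nB : 0 ≤ ∫ x in Ω, (1 / (2 * (T / n))) * (w x - Ue (i - 1) x) ^ 2 :=
    integral_nonneg fun x => mul_nonneg (by positivity) (sq_nonneg _)
  have nC : 0 ≤ ∫ x in Ω, pen ρ (w x - (f x - ε)) :=
    integral_nonneg fun x => pen_nonneg hρ.le _
  have nD : 0 ≤ ∫ x in Ω, pen ρ (g x - w x) :=
    integral_nonneg fun x => pen_nonneg hρ.le _
  rw [hsum] at hGw_le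
  have eA : ∫ x in Ω, (1 / 2) * (lap w x) ^ 2 = (1 / 2) * ∫ x in Ω, (lap w x) ^ 2 :=
    integral_const_mul _ _
  have eB : ∫ x in Ω, (1 / (2 * (T / n))) * (w x - Ue (i - 1) x) ^ 2
      = (1 / (2 * (T / n))) * ∫ x in Ω, (w x - Ue (i - 1) x) ^ 2 :=
    integral_const_mul _ _
  refine ⟨by linarith, by linarith, ?_⟩
  -- penalization estimates
  have hCE : ∫ x in Ω, pen ρ (w x - (f x - ε)) ≤ energy Ω u₀ := by linarith
  have hDE : ∫ x in Ω, pen ρ (g x - w x) ≤ energy Ω u₀ := by linarith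
  have e1 : ∀ x, (max (f x - ε - w x) 0) ^ 2 = ρ * pen ρ (w x - (f x - ε)) := by
    intro x
    rw [pen_eq, neg_sub, mul_div_cancel₀ _ hρ.ne']
  have e2 : ∀ x, (max (w x - g x) 0) ^ 2 = ρ * pen ρ (g x - w x) := by
    intro x
    rw [pen_eq, neg_sub, mul_div_cancel₀ _ hρ.ne']
  refine max_le ?_ ?_
  · calc ∫ x in Ω, (max (f x - ε - w x) 0) ^ 2
        = ∫ x in Ω, ρ * pen ρ (w x - (f x - ε)) := by simp_rw [e1]
      _ = ρ * ∫ x in Ω, pen ρ (w x - (f x - ε)) := integral_const_mul _ _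
      _ ≤ ρ * energy Ω u₀ := mul_le_mul_of_nonneg_left hCE hρ.le
  · calc ∫ x in Ω, (max (w x - g x) 0) ^ 2
        = ∫ x in Ω, ρ * pen ρ (g x - w x) := by simp_rw [e2]
      _ = ρ * ∫ x in Ω, pen ρ (g x - w x) := integral_const_mul _ _
      _ ≤ ρ * energy Ω u₀ := mul_le_mul_of_nonneg_left hDE hρ.le

end TwoObstacle
end
end
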